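/- Suppose s ∈ 𝕀_{n,+}^r with n ≥ n(s). Then there exists a closed element s_0 ∈ s̄[n], and the set of all closed elements of s̄[n] is contained in the Σ_r-orbit Σ_r·s_0. -/

import Mathlib

open scoped Classical

/-- An interval `[i,j]` is encoded as the pair `(i,j)` of integers. -/
abbrev Intv := ℤ × ℤ

/-- Membership in `𝕀ₙ`: `0 ≤ j - i ≤ n + 1`. -/
def memI (n : ℕ) (a : Intv) : Prop := 0 ≤ a.2 - a.1 ∧ a.2 - a.1 ≤ (n : ℤ) + 1

/-- The pair `([i₁,j₁],[i₂,j₂])` is connected (for the parameter `n`). -/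
def Conn (n : ℕ) (a b : Intv) : Prop :=
  (b.1 < a.1 ∧ a.1 ≤ b.2 ∧ b.2 < a.2 ∧ 0 ≤ a.2 - b.1 ∧ a.2 - b.1 ≤ (n : ℤ) + 1) ∨
  (a.1 < b.1 ∧ b.1 ≤ a.2 ∧ a.2 < b.2 ∧ 0 ≤ b.2 - a.1 ∧ b.2 - a.1 ≤ (n : ℤ) + 1)

/-- The partial map `τ_{m,ℓ}`, with `none` playing the role of `0`. -/
noncomputable def tau (n : ℕ) {r : ℕ} (m l : Fin r) (s : Fin r → Intv) :
    Option (Fin r → Intv) :=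
  if Conn n (s m) (s l) then
    some (Function.update (Function.update s m ((s l).1, (s m).2)) l ((s m).1, (s l).2))
  else none

/-- A subset `J ⊆ 𝕀ₙ^r` is closed. -/
def IsClosedSet (n : ℕ) {r : ℕ} (J : Set (Fin r → Intv)) : Prop :=
  ∀ s ∈ J, ∀ m l : Fin r, m < l →
    (∀ s', tau n m l s = some s' → s' ∈ J) ∧
    ((s m).2 = (s l).2 → (fun u => s (Equiv.swap m l u)) ∈ J)

/-- `s̄[n]`: the smallest closed subset of `𝕀ₙ^r` containing `s`. -/
def sbar (n : ℕ) {r : ℕ} (s : Fin r → Intv) : Set (Fin r → Intv) :=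
  ⋂₀ {J | IsClosedSet n J ∧ s ∈ J}

/-- `s` is a closed element: `s̄[n] ⊆ Σ_r · s`. -/
def IsClosedElt (n : ℕ) {r : ℕ} (s : Fin r → Intv) : Prop :=
  ∀ s' ∈ sbar n s, ∃ w : Equiv.Perm (Fin r), s' = fun u => s (w u)

/-- `s ∈ 𝕀_{n,+}^r`: all entries are intervals and the right endpoints are
weakly decreasing. -/
def Iplus (n : ℕ) {r : ℕ} (s : Fin r → Intv) : Prop :=
  (∀ t, memI n (s t)) ∧ ∀ p : ℕ, (hp : p + 1 < r) → (s ⟨p + 1, hp⟩).2 ≤ (s ⟨p, by omega⟩).2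

/-- `Σ_r(s)`: the subgroup of `Σ_r` generated by the simple transpositions `σ_p`
with `j_p = j_{p+1}`. -/
def SigmaS {r : ℕ} (s : Fin r → Intv) : Subgroup (Equiv.Perm (Fin r)) :=
  Subgroup.closure { w | ∃ p : ℕ, ∃ hp : p + 1 < r,
      (s ⟨p, by omega⟩).2 = (s ⟨p + 1, hp⟩).2 ∧
      w = Equiv.swap ⟨p, by omega⟩ ⟨p + 1, hp⟩ }

section Aux

open scoped Classical

namespace Stmt6

def Cross (a b : Intv) : Prop :=
  (b.1 < a.1 ∧ a.1 ≤ b.2 ∧ b.2 < a.2) ∨ (a.1 < b.1 ∧ b.1 ≤ a.2 ∧ a.2 < b.2)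

lemma Cross.symm' {a b : Intv} (h : Cross a b) : Cross b a := h.elim Or.inr Or.inl

lemma cross_irrefl (a : Intv) : ¬ Cross a a := by
  rintro (⟨h, _⟩ | ⟨h, _⟩) <;> exact lt_irrefl _ h

lemma Conn.cross {n : ℕ} {a b : Intv} (h : Conn n a b) : Cross a b := by
  rcases h with ⟨h1, h2, h3, _⟩ | ⟨h1, h2, h3, _⟩
  · exact Or.inl ⟨h1, h2, h3⟩
  · exact Or.inr ⟨h1, h2, h3⟩

def P {r : ℕ} (f : Fin r → Intv) : Multiset Intv := Multiset.map f Finset.univ.val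

lemma mem_P {r : ℕ} {f : Fin r → Intv} {a : Intv} : a ∈ P f ↔ ∃ u, f u = a := by
  simp [P, List.mem_ofFn, Set.mem_range]

lemma P_comp_perm {r : ℕ} (f : Fin r → Intv) (w : Equiv.Perm (Fin r)) :
    P (fun u => f (w u)) = P f := by
  have h : (Finset.univ.val : Multiset (Fin r)).map (w : Fin r → Fin r) = Finset.univ.val := by
    have := congrArg Finset.val (Finset.map_univ_equiv w)
    simpa [Finset.map_val] using this
  unfold P
  conv_rhs => rw [← h]
  rw [Multiset.map_map]
  rfl

lemma univ_decomp {r : ℕ} {m l : Fin r} (hml : m ≠ l) :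
    ∃ R : Multiset (Fin r), (∀ t ∈ R, t ≠ m ∧ t ≠ l) ∧
      (Finset.univ.val : Multiset (Fin r)) = m ::ₘ l ::ₘ R := by
  have hnd : (Finset.univ.val : Multiset (Fin r)).Nodup := Finset.univ.nodup
  have hm : m ∈ (Finset.univ.val : Multiset (Fin r)) := Finset.mem_univ_val m
  have hl : l ∈ (Finset.univ.val : Multiset (Fin r)).erase m := by
    rw [hnd.mem_erase_iff]
    refine ⟨fun h => hml h.symm, Finset.mem_univ_val l⟩
  refine ⟨((Finset.univ.val : Multiset (Fin r)).erase m).erase l, ?_, ?_⟩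
  · intro t ht
    have h1 : t ∈ (Finset.univ.val : Multiset (Fin r)).erase m :=
      Multiset.mem_of_mem_erase ht
    have h2 : t ≠ l := ((hnd.erase m).mem_erase_iff.mp ht).1
    have h3 : t ≠ m := (hnd.mem_erase_iff.mp h1).1
    exact ⟨h3, h2⟩
  · rw [Multiset.cons_erase hl, Multiset.cons_erase hm]

lemma P_split {r : ℕ} {m l : Fin r} (hml : m ≠ l) :
    ∃ R : Multiset (Fin r), (∀ t ∈ R, t ≠ m ∧ t ≠ l) ∧
      ∀ h : Fin r → Intv, P h = h m ::ₘ h l ::ₘ R.map h := by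
  obtain ⟨R, hR, hu⟩ := univ_decomp hml
  exact ⟨R, hR, fun h => by rw [P, hu]; simp⟩

/-- The τ-image as an explicit function. -/
def tupd {r : ℕ} (f : Fin r → Intv) (m l : Fin r) : Fin r → Intv :=
  Function.update (Function.update f m ((f l).1, (f m).2)) l ((f m).1, (f l).2)

lemma tau_eq_some_iff {n r : ℕ} {m l : Fin r} {f f' : Fin r → Intv} :
    tau n m l f = some f' ↔ Conn n (f m) (f l) ∧ f' = tupd f m l := by
  unfold tau tupd
  by_cases h : Conn n (f m) (f l)
  · rw [if_pos h]
    constructor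
    · intro he
      exact ⟨h, (Option.some_inj.mp he).symm⟩
    · rintro ⟨_, rfl⟩
      rfl
  · rw [if_neg h]
    constructor
    · intro he
      cases he
    · rintro ⟨hc, _⟩
      exact absurd hc h

lemma tupd_apply_m {r : ℕ} {f : Fin r → Intv} {m l : Fin r} (hml : m ≠ l) :
    tupd f m l m = ((f l).1, (f m).2) := by
  unfold tupd
  rw [Function.update_of_ne hml, Function.update_self]

lemma tupd_apply_l {r : ℕ} {f : Fin r → Intv} {m l : Fin r} :
    tupd f m l l = ((f m).1, (f l).2) := by
  unfold tupd
  rw [Function.update_self]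

lemma tupd_apply_other {r : ℕ} {f : Fin r → Intv} {m l t : Fin r}
    (htm : t ≠ m) (htl : t ≠ l) : tupd f m l t = f t := by
  unfold tupd
  rw [Function.update_of_ne htl, Function.update_of_ne htm]

lemma P_tupd {r : ℕ} (f : Fin r → Intv) {m l : Fin r} (hml : m ≠ l) :
    ∃ R₀ : Multiset Intv,
      P f = f m ::ₘ f l ::ₘ R₀ ∧
      P (tupd f m l) = ((f l).1, (f m).2) ::ₘ ((f m).1, (f l).2) ::ₘ R₀ := by
  obtain ⟨R, hR, hP⟩ := P_split hml
  refine ⟨R.map f, hP f, ?_⟩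
  rw [hP (tupd f m l), tupd_apply_m hml, tupd_apply_l]
  congr 1
  congr 1
  exact Multiset.map_congr rfl fun t ht => tupd_apply_other (hR t ht).1 (hR t ht).2

section Main

variable {n : ℕ} {r : ℕ} {s : Fin r → Intv}

/-- The invariant set: same endpoint multisets as `s`, all entries intervals. -/
def Good (_n : ℕ) {r : ℕ} (s : Fin r → Intv) : Set (Fin r → Intv) :=
  { f | (P f).map Prod.fst = (P s).map Prod.fst ∧
        (P f).map Prod.snd = (P s).map Prod.snd ∧
        ∀ t, (f t).1 ≤ (f t).2 }

lemma good_bound (hn : ∀ t p : Fin r, (s t).2 - (s p).1 ≤ (n : ℤ) + 1)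
    {f : Fin r → Intv} (hf : f ∈ Good n s) (t p : Fin r) :
    (f t).2 - (f p).1 ≤ (n : ℤ) + 1 := by
  have h2 : (f t).2 ∈ (P s).map Prod.snd := by
    rw [← hf.2.1]
    exact Multiset.mem_map_of_mem _ (mem_P.mpr ⟨t, rfl⟩)
  have h1 : (f p).1 ∈ (P s).map Prod.fst := by
    rw [← hf.1]
    exact Multiset.mem_map_of_mem _ (mem_P.mpr ⟨p, rfl⟩)
  obtain ⟨a, ha, ha2⟩ := Multiset.mem_map.mp h2
  obtain ⟨b, hb, hb1⟩ := Multiset.mem_map.mp h1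
  obtain ⟨t', rfl⟩ := mem_P.mp ha
  obtain ⟨p', rfl⟩ := mem_P.mp hb
  rw [← ha2, ← hb1]
  exact hn t' p'

lemma good_conn_of_cross (hn : ∀ t p : Fin r, (s t).2 - (s p).1 ≤ (n : ℤ) + 1)
    {f : Fin r → Intv} (hf : f ∈ Good n s) {m l : Fin r}
    (h : Cross (f m) (f l)) : Conn n (f m) (f l) := by
  rcases h with ⟨h1, h2, h3⟩ | ⟨h1, h2, h3⟩
  · exact Or.inl ⟨h1, h2, h3, by linarith, good_bound hn hf m l⟩
  · exact Or.inr ⟨h1, h2, h3, by linarith, good_bound hn hf l m⟩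

lemma good_isClosedSet (hn : ∀ t p : Fin r, (s t).2 - (s p).1 ≤ (n : ℤ) + 1) :
    IsClosedSet n (Good n s) := by
  intro f hf m l hml
  have hml' : m ≠ l := ne_of_lt hml
  constructor
  · intro f' hf'
    obtain ⟨hconn, rfl⟩ := tau_eq_some_iff.mp hf'
    obtain ⟨R₀, hPf, hPf'⟩ := P_tupd f hml'
    refine ⟨?_, ?_, ?_⟩
    · rw [hPf', ← hf.1, hPf]
      simp only [Multiset.map_cons]
      exact Multiset.cons_swap _ _ _
    · rw [← hf.2.1, hPf', hPf]
      simp only [Multiset.map_cons]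
    · intro t
      rcases eq_or_ne t m with rfl | htm
      · rw [tupd_apply_m hml']
        show (f l).1 ≤ (f t).2
        rcases hconn with ⟨_, h2, h3, _⟩ | ⟨h1, h2, _⟩ <;> linarith
      · rcases eq_or_ne t l with rfl | htl
        · rw [tupd_apply_l]
          show (f m).1 ≤ (f t).2
          have := hf.2.2 t
          rcases hconn with ⟨_, h2, _⟩ | ⟨h1, _⟩ <;> linarith
        · rw [tupd_apply_other htm htl]
          exact hf.2.2 t
  · intro _
    refine ⟨?_, ?_, fun t => hf.2.2 _⟩
    · rw [P_comp_perm f (Equiv.swap m l)]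
      exact hf.1
    · rw [P_comp_perm f (Equiv.swap m l)]
      exact hf.2.1

lemma self_mem_good (hs : Iplus n s) : s ∈ Good n s :=
  ⟨rfl, rfl, fun t => by have := (hs.1 t).1; linarith⟩

lemma self_mem_sbar : s ∈ sbar n s :=
  Set.mem_sInter.mpr fun _ hJ => hJ.2

lemma sbar_subset {J : Set (Fin r → Intv)} (hJ : IsClosedSet n J) (hsJ : s ∈ J) :
    sbar n s ⊆ J := fun _ hf => Set.mem_sInter.mp hf J ⟨hJ, hsJ⟩

lemma sbar_isClosedSet (s : Fin r → Intv) : IsClosedSet n (sbar n s) := by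
  intro f hf m l hml
  constructor
  · intro f' hf'
    exact Set.mem_sInter.mpr fun J hJ =>
      ((hJ.1 f (Set.mem_sInter.mp hf J hJ) m l hml).1 f' hf')
  · intro hj
    exact Set.mem_sInter.mpr fun J hJ =>
      ((hJ.1 f (Set.mem_sInter.mp hf J hJ) m l hml).2 hj)

/-- The measure: sum of squared lengths. -/
def mu {r : ℕ} (f : Fin r → Intv) : ℤ :=
  ((P f).map fun p => (p.2 - p.1) ^ 2).sum

lemma mu_comp_perm (f : Fin r → Intv) (w : Equiv.Perm (Fin r)) :
    mu (fun u => f (w u)) = mu f := by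
  unfold mu
  rw [P_comp_perm]

lemma mu_lt_tupd {f : Fin r → Intv} {m l : Fin r} (hml : m ≠ l)
    (hconn : Conn n (f m) (f l)) : mu f < mu (tupd f m l) := by
  obtain ⟨R₀, hPf, hPf'⟩ := P_tupd f hml
  unfold mu
  rw [hPf, hPf']
  simp only [Multiset.map_cons, Multiset.sum_cons]
  have key : ((f m).2 - (f m).1) ^ 2 + ((f l).2 - (f l).1) ^ 2 <
      ((f m).2 - (f l).1) ^ 2 + ((f l).2 - (f m).1) ^ 2 := by
    rcases hconn with ⟨h1, h2, h3, _⟩ | ⟨h1, h2, h3, _⟩ <;> nlinarith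
  linarith

lemma mu_le_bound (hn : ∀ t p : Fin r, (s t).2 - (s p).1 ≤ (n : ℤ) + 1)
    {f : Fin r → Intv} (hf : f ∈ Good n s) : mu f ≤ (r : ℤ) * ((n : ℤ) + 1) ^ 2 := by
  have hcard : (P f).card = r := by
    simp [P]
  have : ∀ x ∈ (P f).map fun p => (p.2 - p.1) ^ 2, x ≤ ((n : ℤ) + 1) ^ 2 := by
    intro x hx
    obtain ⟨a, ha, rfl⟩ := Multiset.mem_map.mp hx
    obtain ⟨u, rfl⟩ := mem_P.mp ha
    have h1 : (f u).1 ≤ (f u).2 := hf.2.2 u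
    have h2 : (f u).2 - (f u).1 ≤ (n : ℤ) + 1 := good_bound hn hf u u
    nlinarith
  have := Multiset.sum_le_card_nsmul _ _ this
  rw [Multiset.card_map, hcard] at this
  simpa [nsmul_eq_mul, mu] using this

/-- Non-crossing tuples. -/
def NC {r : ℕ} (f : Fin r → Intv) : Prop := ∀ m l : Fin r, ¬ Cross (f m) (f l)

lemma exists_tau_of_not_nc {f : Fin r → Intv}
    (hn : ∀ t p : Fin r, (s t).2 - (s p).1 ≤ (n : ℤ) + 1)
    (hf : f ∈ Good n s) (h : ¬ NC f) :
    ∃ m l : Fin r, m < l ∧ tau n m l f = some (tupd f m l) := by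
  simp only [NC, not_forall, not_not] at h
  obtain ⟨m, l, hc⟩ := h
  have hne : m ≠ l := by
    rintro rfl
    exact cross_irrefl _ hc
  rcases lt_or_gt_of_ne hne with hlt | hgt
  · exact ⟨m, l, hlt, tau_eq_some_iff.mpr ⟨good_conn_of_cross hn hf hc, rfl⟩⟩
  · exact ⟨l, m, hgt, tau_eq_some_iff.mpr ⟨good_conn_of_cross hn hf (Cross.symm' hc), rfl⟩⟩

lemma exists_nc (hs : Iplus n s)
    (hn : ∀ t p : Fin r, (s t).2 - (s p).1 ≤ (n : ℤ) + 1) :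
    ∃ f₀ ∈ sbar n s, NC f₀ := by
  have hsub : sbar n s ⊆ Good n s := sbar_subset (good_isClosedSet hn) (self_mem_good hs)
  set B : ℤ := (r : ℤ) * ((n : ℤ) + 1) ^ 2 + 1 with hB
  suffices h : ∀ (k : ℕ) (f : Fin r → Intv), f ∈ sbar n s → (B - mu f).toNat ≤ k →
      ∃ f₀ ∈ sbar n s, NC f₀ by
    exact h (B - mu s).toNat s (self_mem_sbar) le_rfl
  intro k
  induction k with
  | zero =>
    intro f hf hk
    exfalso
    have h1 : mu f ≤ (r : ℤ) * ((n : ℤ) + 1) ^ 2 := mu_le_bound hn (hsub hf)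
    have h2 : 0 < B - mu f := by omega
    omega
  | succ k ih =>
    intro f hf hk
    by_cases hnc : NC f
    · exact ⟨f, hf, hnc⟩
    · obtain ⟨m, l, hml, htau⟩ := exists_tau_of_not_nc hn (hsub hf) hnc
      have hf' : tupd f m l ∈ sbar n s :=
        ((sbar_isClosedSet s f hf m l hml).1 _ htau)
      have hmu : mu f < mu (tupd f m l) :=
        mu_lt_tupd (ne_of_lt hml) (tau_eq_some_iff.mp htau).1
      have hb' : mu (tupd f m l) ≤ (r : ℤ) * ((n : ℤ) + 1) ^ 2 := mu_le_bound hn (hsub hf')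
      refine ih (tupd f m l) hf' ?_
      omega

lemma nc_isClosedElt {f₀ : Fin r → Intv} (h : NC f₀) : IsClosedElt n f₀ := by
  have horb : IsClosedSet n {g | ∃ w : Equiv.Perm (Fin r), g = fun u => f₀ (w u)} := by
    rintro g ⟨w, rfl⟩ m l hml
    constructor
    · intro g' hg'
      exfalso
      exact h (w m) (w l) (Conn.cross (tau_eq_some_iff.mp hg').1)
    · intro _
      exact ⟨(Equiv.swap m l).trans w, rfl⟩
  intro t ht
  have : t ∈ {g | ∃ w : Equiv.Perm (Fin r), g = fun u => f₀ (w u)} :=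
    sbar_subset horb ⟨Equiv.refl _, rfl⟩ ht
  obtain ⟨w, rfl⟩ := this
  exact ⟨w, rfl⟩

lemma nc_of_isClosedElt (hn : ∀ t p : Fin r, (s t).2 - (s p).1 ≤ (n : ℤ) + 1)
    {t : Fin r → Intv} (htG : t ∈ Good n s) (ht : IsClosedElt n t) : NC t := by
  by_contra hnc
  obtain ⟨m, l, hml, htau⟩ := exists_tau_of_not_nc hn htG hnc
  have ht' : tupd t m l ∈ sbar n t :=
    (sbar_isClosedSet t t (self_mem_sbar) m l hml).1 _ htau
  obtain ⟨w, hw⟩ := ht _ ht'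
  have h1 : mu (tupd t m l) = mu t := by
    rw [hw]
    exact mu_comp_perm t w
  have h2 : mu t < mu (tupd t m l) :=
    mu_lt_tupd (ne_of_lt hml) (tau_eq_some_iff.mp htau).1
  omega

end Main

section Unique

/-- Pairwise non-crossing for a multiset of intervals. -/
def PairsNC (A : Multiset Intv) : Prop := ∀ a ∈ A, ∀ b ∈ A, ¬ Cross a b

lemma partner (A : Multiset Intv) (hint : ∀ a ∈ A, a.1 ≤ a.2) (hnc : PairsNC A)
    (b : ℤ) (hbmem : b ∈ A.map Prod.fst) (hbmax : ∀ x ∈ A.map Prod.fst, x ≤ b) :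
    ∃ d, (b, d) ∈ A ∧ b ≤ d ∧ ∀ j ∈ A.map Prod.snd, b ≤ j → d ≤ j := by
  classical
  set D : Multiset ℤ := (A.filter (fun p => p.1 = b)).map Prod.snd with hD
  have hDne : D.toFinset.Nonempty := by
    obtain ⟨p, hp, hpb⟩ := Multiset.mem_map.mp hbmem
    refine ⟨p.2, Multiset.mem_toFinset.mpr ?_⟩
    exact Multiset.mem_map_of_mem _ (Multiset.mem_filter.mpr ⟨hp, hpb⟩)
  set d : ℤ := D.toFinset.min' hDne with hd
  have hdD : d ∈ D := Multiset.mem_toFinset.mp (D.toFinset.min'_mem hDne)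
  obtain ⟨p, hp, hpd⟩ := Multiset.mem_map.mp hdD
  have hpA : p ∈ A := (Multiset.mem_filter.mp hp).1
  have hpb : p.1 = b := (Multiset.mem_filter.mp hp).2
  have hbdA : (b, d) ∈ A := by
    have : p = (b, d) := Prod.ext hpb hpd
    rwa [this] at hpA
  refine ⟨d, hbdA, ?_, ?_⟩
  · have := hint _ hbdA
    simpa using this
  · intro j hj hbj
    obtain ⟨q, hq, hqj⟩ := Multiset.mem_map.mp hj
    rcases eq_or_ne q.1 b with hqb | hqb
    · have : j ∈ D := by
        rw [hD]
        exact Multiset.mem_map.mpr ⟨q, Multiset.mem_filter.mpr ⟨hq, hqb⟩, hqj⟩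
      exact D.toFinset.min'_le j (Multiset.mem_toFinset.mpr this)
    · have hqlt : q.1 < b := lt_of_le_of_ne (hbmax q.1 (Multiset.mem_map_of_mem _ hq)) hqb
      by_contra hjd
      push_neg at hjd
      refine hnc q hq (b, d) hbdA (Or.inr ?_)
      refine ⟨by simpa using hqlt, by simp [hqj ▸ hbj], by simp [hqj ▸ hjd]⟩

lemma key_unique : ∀ (k : ℕ) (A B : Multiset Intv), A.card ≤ k →
    (∀ a ∈ A, a.1 ≤ a.2) → (∀ a ∈ B, a.1 ≤ a.2) → PairsNC A → PairsNC B →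
    A.map Prod.fst = B.map Prod.fst → A.map Prod.snd = B.map Prod.snd → A = B := by
  intro k
  induction k with
  | zero =>
    intro A B hcard _ _ _ _ hfst _
    have hA : A = 0 := Multiset.card_eq_zero.mp (Nat.le_zero.mp hcard)
    have : B.card = 0 := by
      have := congrArg Multiset.card hfst
      simpa [hA] using this.symm
    rw [hA, Multiset.card_eq_zero.mp this]
  | succ k ih =>
    intro A B hcard hintA hintB hncA hncB hfst hsnd
    rcases eq_or_ne A 0 with rfl | hAne
    · have : B.card = 0 := by
        have := congrArg Multiset.card hfst
        simpa using this.symm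
      rw [Multiset.card_eq_zero.mp this]
    · have hAfne : (A.map Prod.fst).toFinset.Nonempty := by
        obtain ⟨a, ha⟩ := Multiset.exists_mem_of_ne_zero hAne
        exact ⟨a.1, Multiset.mem_toFinset.mpr (Multiset.mem_map_of_mem _ ha)⟩
      set b : ℤ := (A.map Prod.fst).toFinset.max' hAfne with hb
      have hbmemA : b ∈ A.map Prod.fst :=
        Multiset.mem_toFinset.mp ((A.map Prod.fst).toFinset.max'_mem hAfne)
      have hbmaxA : ∀ x ∈ A.map Prod.fst, x ≤ b := fun x hx =>
        (A.map Prod.fst).toFinset.le_max' x (Multiset.mem_toFinset.mpr hx)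
      have hbmemB : b ∈ B.map Prod.fst := hfst ▸ hbmemA
      have hbmaxB : ∀ x ∈ B.map Prod.fst, x ≤ b := fun x hx => hbmaxA x (hfst ▸ hx)
      obtain ⟨dA, hdA, hbdA, hminA⟩ := partner A hintA hncA b hbmemA hbmaxA
      obtain ⟨dB, hdB, hbdB, hminB⟩ := partner B hintB hncB b hbmemB hbmaxB
      have hdAB : dA = dB := by
        have h1 : dA ≤ dB := hminA dB (hsnd ▸ Multiset.mem_map_of_mem _ hdB) hbdB
        have h2 : dB ≤ dA := hminB dA (hsnd ▸ Multiset.mem_map_of_mem _ hdA) hbdA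
        omega
      subst hdAB
      obtain ⟨A', hA'⟩ := Multiset.exists_cons_of_mem hdA
      obtain ⟨B', hB'⟩ := Multiset.exists_cons_of_mem hdB
      have hfst' : A'.map Prod.fst = B'.map Prod.fst := by
        have := hfst
        rw [hA', hB'] at this
        simpa using this
      have hsnd' : A'.map Prod.snd = B'.map Prod.snd := by
        have := hsnd
        rw [hA', hB'] at this
        simpa using this
      have hcard' : A'.card ≤ k := by
        have := hcard
        rw [hA'] at this
        simpa using this
      have hsubA : ∀ a ∈ A', a ∈ A := fun a ha => hA' ▸ Multiset.mem_cons_of_mem ha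
      have hsubB : ∀ a ∈ B', a ∈ B := fun a ha => hB' ▸ Multiset.mem_cons_of_mem ha
      have : A' = B' := ih A' B' hcard'
        (fun a ha => hintA a (hsubA a ha)) (fun a ha => hintB a (hsubB a ha))
        (fun a ha c hc => hncA a (hsubA a ha) c (hsubA c hc))
        (fun a ha c hc => hncB a (hsubB a ha) c (hsubB c hc))
        hfst' hsnd'
      rw [hA', hB', this]

lemma exists_perm_of_P_eq : ∀ {r : ℕ} (f g : Fin r → Intv), P f = P g →
    ∃ w : Equiv.Perm (Fin r), g = fun u => f (w u) := by
  intro r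
  induction r with
  | zero =>
    intro f g _
    exact ⟨Equiv.refl _, funext fun u => u.elim0⟩
  | succ r ih =>
    intro f g hPfg
    have hg0 : g 0 ∈ P f := hPfg ▸ mem_P.mpr ⟨0, rfl⟩
    obtain ⟨kk, hk⟩ := mem_P.mp hg0
    set ft : Fin (r + 1) → Intv := fun u => f (Equiv.swap 0 kk u) with hft
    have hPft : P ft = P g := by
      rw [hft, P_comp_perm f (Equiv.swap 0 kk), hPfg]
    have hofn : ∀ h : Fin (r + 1) → Intv,
        P h = h 0 ::ₘ P (fun i : Fin r => h i.succ) := by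
      intro h
      unfold P
      rw [Fin.univ_val_map, Fin.univ_val_map, List.ofFn_succ]
      rfl
    have hft0 : ft 0 = g 0 := by
      rw [hft]
      simp [hk]
    have htail : P (fun i : Fin r => ft i.succ) = P (fun i : Fin r => g i.succ) := by
      have := hPft
      rw [hofn ft, hofn g, hft0] at this
      exact (Multiset.cons_inj_right _).mp this
    obtain ⟨σ', hσ'⟩ := ih (fun i : Fin r => ft i.succ) (fun i : Fin r => g i.succ) htail
    set τ : Equiv.Perm (Fin (r + 1)) := Equiv.Perm.decomposeFin.symm (0, σ') with hτ
    refine ⟨τ.trans (Equiv.swap 0 kk), ?_⟩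
    funext u
    induction u using Fin.cases with
    | zero =>
      have : τ 0 = 0 := by
        rw [hτ]
        simp [Equiv.Perm.decomposeFin_symm_apply_zero]
      simp only [Equiv.trans_apply, this]
      rw [← hk]
      simp
    | succ i =>
      have hτs : τ i.succ = (σ' i).succ := by
        rw [hτ]
        simp [Equiv.Perm.decomposeFin_symm_apply_succ]
      simp only [Equiv.trans_apply, hτs]
      have := congrFun hσ' i
      simpa [hft] using this

end Unique

end Stmt6

end Aux

/-- for `s ∈ 𝕀_{n,+}^r` with `n ≥ n(s)`, there exists a closed element
`s₀ ∈ s̄[n]`, and every closed element of `s̄[n]` lies in the `Σ_r`-orbit of `s₀`. -/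
theorem stmt_6 (n r : ℕ) (s : Fin r → Intv) (hs : Iplus n s)
    (hn : ∀ t p : Fin r, (s t).2 - (s p).1 ≤ (n : ℤ) + 1) :
    ∃ s₀ ∈ sbar n s, IsClosedElt n s₀ ∧
      ∀ t ∈ sbar n s, IsClosedElt n t → ∃ w : Equiv.Perm (Fin r), t = fun u => s₀ (w u) := by
  classical
  obtain ⟨s₀, hs₀mem, hs₀nc⟩ := Stmt6.exists_nc hs hn
  refine ⟨s₀, hs₀mem, Stmt6.nc_isClosedElt hs₀nc, ?_⟩
  intro t ht htce
  have hsub : sbar n s ⊆ Stmt6.Good n s :=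
    Stmt6.sbar_subset (Stmt6.good_isClosedSet hn) (Stmt6.self_mem_good hs)
  have htG := hsub ht
  have hs₀G := hsub hs₀mem
  have htnc : Stmt6.NC t := Stmt6.nc_of_isClosedElt hn htG htce
  have hPeq : Stmt6.P s₀ = Stmt6.P t := by
    refine Stmt6.key_unique (Stmt6.P s₀).card _ _ le_rfl ?_ ?_ ?_ ?_ ?_ ?_
    · intro a ha
      obtain ⟨u, rfl⟩ := Stmt6.mem_P.mp ha
      exact hs₀G.2.2 u
    · intro a ha
      obtain ⟨u, rfl⟩ := Stmt6.mem_P.mp ha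
      exact htG.2.2 u
    · intro a ha c hc
      obtain ⟨u, rfl⟩ := Stmt6.mem_P.mp ha
      obtain ⟨v, rfl⟩ := Stmt6.mem_P.mp hc
      exact hs₀nc u v
    · intro a ha c hc
      obtain ⟨u, rfl⟩ := Stmt6.mem_P.mp ha
      obtain ⟨v, rfl⟩ := Stmt6.mem_P.mp hc
      exact htnc u v
    · rw [hs₀G.1, htG.1]
    · rw [hs₀G.2.1, htG.2.1]
  exact Stmt6.exists_perm_of_P_eq s₀ t hPeq
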